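/- arXiv:1710.08724 — 4 statements merged into one kernel-verified Lean document; each statement's English description precedes it below -/
import Mathlib

section
/- For the n-fold composition of linear fractional generating maps F₁,...,Fₙ (each of the form F_k(s) = 1 - M_k(1-s)/(1 + ⟨w_k, 1-s⟩)), one has 1 - F₁(F₂(⋯Fₙ(s)⋯)) = M_{1,n}(1-s)/(1 + ⟨D_n, 1-s⟩), where M_{1,n} := M₁M₂⋯Mₙ and D_n := w₁M_{2,n} + w₂M_{3,n} + ⋯ + w_{n-1}Mₙ + wₙ with M_{k,n} := M_k⋯M_n. -/
open Matrix

/-- The K-dimensional linear fractional map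
`F(s) = 1 - M(1-s)/(1 + ⟨w, 1-s⟩)`. -/
noncomputable def linFracMap {K : ℕ} (M : Matrix (Fin K) (Fin K) ℝ)
    (w : Fin K → ℝ) (s : Fin K → ℝ) : Fin K → ℝ :=
  fun i => 1 - (M.mulVec (fun j => 1 - s j)) i / (1 + w ⬝ᵥ (fun j => 1 - s j))

/-- The `n`-fold composition `F₁ ∘ F₂ ∘ ⋯ ∘ Fₙ` of the linear fractional maps
with data `(M k, w k)`, `k = 1, …, n` (indices start at 1). -/
noncomputable def linFracComp {K : ℕ} (M : ℕ → Matrix (Fin K) (Fin K) ℝ)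
    (w : ℕ → Fin K → ℝ) : ℕ → (Fin K → ℝ) → (Fin K → ℝ)
  | 0, s => s
  | n + 1, s => linFracComp M w n (linFracMap (M (n + 1)) (w (n + 1)) s)

/-- The ordered matrix product `M_{1,n} = M₁ M₂ ⋯ Mₙ`. -/
noncomputable def matProd {K : ℕ} (M : ℕ → Matrix (Fin K) (Fin K) ℝ) :
    ℕ → Matrix (Fin K) (Fin K) ℝ
  | 0 => 1
  | n + 1 => matProd M n * M (n + 1)

/-- `D_n = w₁ M_{2,n} + w₂ M_{3,n} + ⋯ + w_{n-1} Mₙ + wₙ`, defined by the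
recursion `D_{n+1} = D_n M_{n+1} + w_{n+1}`. -/
noncomputable def linFracD {K : ℕ} (M : ℕ → Matrix (Fin K) (Fin K) ℝ)
    (w : ℕ → Fin K → ℝ) : ℕ → (Fin K → ℝ)
  | 0 => 0
  | n + 1 => Matrix.vecMul (linFracD M w n) (M (n + 1)) + w (n + 1)


lemma linFracD_nonneg {K : ℕ} (M : ℕ → Matrix (Fin K) (Fin K) ℝ)
    (w : ℕ → Fin K → ℝ) (hM : ∀ k i j, 0 ≤ M k i j) (hw : ∀ k j, 0 ≤ w k j) :
    ∀ n j, 0 ≤ linFracD M w n j := by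
  intro n
  induction n with
  | zero => intro j; simp [linFracD]
  | succ n ih =>
    intro j
    simp only [linFracD, Pi.add_apply]
    refine add_nonneg ?_ (hw _ _)
    simp only [Matrix.vecMul, dotProduct]
    exact Finset.sum_nonneg fun i _ => mul_nonneg (ih i) (hM _ _ _)

lemma linFracComp_eq_aux {K : ℕ} (M : ℕ → Matrix (Fin K) (Fin K) ℝ)
    (w : ℕ → Fin K → ℝ) (hM : ∀ k i j, 0 ≤ M k i j) (hw : ∀ k j, 0 ≤ w k j) :
    ∀ (n : ℕ) (s : Fin K → ℝ), (∀ j, s j ≤ 1) →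
    ∀ i, 1 - linFracComp M w n s i =
      ((matProd M n).mulVec (fun j => 1 - s j)) i /
        (1 + linFracD M w n ⬝ᵥ (fun j => 1 - s j)) := by
  intro n
  induction n with
  | zero =>
    intro s _ i
    simp [linFracComp, matProd, linFracD]
  | succ n ih =>
    intro s hs i
    set v : Fin K → ℝ := fun j => 1 - s j with hv
    have hvpos : ∀ j, 0 ≤ v j := fun j => by simp [hv]; exact hs j
    set c : ℝ := 1 + w (n + 1) ⬝ᵥ v with hc
    have hcpos : 0 < c := by
      have : 0 ≤ w (n + 1) ⬝ᵥ v :=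
        Finset.sum_nonneg fun j _ => mul_nonneg (hw _ _) (hvpos j)
      linarith
    set s' : Fin K → ℝ := linFracMap (M (n + 1)) (w (n + 1)) s with hs'
    have hsub : ∀ j, 1 - s' j = ((M (n + 1)).mulVec v) j / c := fun j => by
      simp [hs', linFracMap, hv, hc]
    have hMv : ∀ j, 0 ≤ ((M (n + 1)).mulVec v) j := fun j => by
      simp only [Matrix.mulVec, dotProduct]
      exact Finset.sum_nonneg fun l _ => mul_nonneg (hM _ _ _) (hvpos l)
    have hs'le : ∀ j, s' j ≤ 1 := fun j => by
      have := hsub j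
      nlinarith [div_nonneg (hMv j) hcpos.le, this]
    have key := ih s' hs'le i
    have hfun : (fun j => 1 - s' j) = fun j => ((M (n + 1)).mulVec v) j / c := funext hsub
    rw [hfun] at key
    have hmul : (matProd M n).mulVec (fun j => ((M (n + 1)).mulVec v) j / c) i
        = ((matProd M (n + 1)).mulVec v) i / c := by
      have : (fun j => ((M (n + 1)).mulVec v) j / c) = c⁻¹ • ((M (n + 1)).mulVec v) := by
        funext j; simp [div_eq_inv_mul, smul_eq_mul]
      rw [this, Matrix.mulVec_smul]
      simp [matProd, Matrix.mulVec_mulVec, div_eq_inv_mul, smul_eq_mul, mul_comm]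
    have hdot : linFracD M w n ⬝ᵥ (fun j => ((M (n + 1)).mulVec v) j / c)
        = (Matrix.vecMul (linFracD M w n) (M (n + 1))) ⬝ᵥ v / c := by
      have : (fun j => ((M (n + 1)).mulVec v) j / c) = c⁻¹ • ((M (n + 1)).mulVec v) := by
        funext j; simp [div_eq_inv_mul, smul_eq_mul]
      rw [this, dotProduct_smul, Matrix.dotProduct_mulVec]
      simp [div_eq_inv_mul, smul_eq_mul]
    rw [hmul, hdot] at key
    have hD1 : linFracD M w (n + 1) ⬝ᵥ v
        = (Matrix.vecMul (linFracD M w n) (M (n + 1))) ⬝ᵥ v + w (n + 1) ⬝ᵥ v := by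
      simp [linFracD, add_dotProduct]
    have hcomp : linFracComp M w (n + 1) s i = linFracComp M w n s' i := rfl
    have hx : 0 ≤ Matrix.vecMul (linFracD M w n) (M (n + 1)) ⬝ᵥ v := by
      refine Finset.sum_nonneg fun j _ => mul_nonneg ?_ (hvpos j)
      simp only [Matrix.vecMul, dotProduct]
      exact Finset.sum_nonneg fun l _ =>
        mul_nonneg (linFracD_nonneg M w hM hw n l) (hM _ _ _)
    have hden : (0:ℝ) < 1 + Matrix.vecMul (linFracD M w n) (M (n + 1)) ⬝ᵥ v / c := by
      positivity
    have hcc : c * (1 + Matrix.vecMul (linFracD M w n) (M (n + 1)) ⬝ᵥ v / c)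
        = 1 + linFracD M w (n + 1) ⬝ᵥ v := by
      rw [hD1]
      field_simp
      ring
    rw [hcomp, key, div_div, hcc]

/-- For the `n`-fold composition of linear fractional generating maps one has
`1 - F₁(F₂(⋯Fₙ(s)⋯)) = M_{1,n}(1-s)/(1 + ⟨D_n, 1-s⟩)`. -/
theorem linFracComp_eq {K : ℕ} (M : ℕ → Matrix (Fin K) (Fin K) ℝ)
    (w : ℕ → Fin K → ℝ) (n : ℕ) (s : Fin K → ℝ)
    (hM : ∀ k i j, 0 ≤ M k i j) (hw : ∀ k j, 0 ≤ w k j)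
    (hs₀ : ∀ j, 0 ≤ s j) (hs₁ : ∀ j, s j ≤ 1) :
    ∀ i, 1 - linFracComp M w n s i =
      ((matProd M n).mulVec (fun j => 1 - s j)) i /
        (1 + linFracD M w n ⬝ᵥ (fun j => 1 - s j)) := by
  exact linFracComp_eq_aux M w hM hw n s hs₁
end

section
/- Let (S_n)_{n≥0} be a random walk with S_0 = 0 and i.i.d. increments X_k with E[X] > 0, and let (η_k)_{k≥1} be identically distributed nonnegative random variables (not necessarily independent of the walk) such that for some ε > 0, E[(log⁺ η_1)^{1+ε}] < ∞. Then the series G := Σ_{k=0}^∞ η_{k+1} e^{-S_k} converges almost surely. -/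
/-!
By the strong law of large numbers `S_k ≥ (m/2) k` eventually, where `m = E[X] > 0`. The moment
condition makes `log⁺ η₁` integrable, so `∑ₖ P(log⁺ η_{k+1} > (m/4) k) < ∞`, and Borel–Cantelli
gives `η_{k+1} ≤ e^{(m/4) k}` eventually. Hence the terms are eventually bounded by the geometric
sequence `e^{-(m/4) k}`.
-/

open MeasureTheory ProbabilityTheory Finset Filter

theorem Real.abs_le_exp_log (x : ℝ) : |x| ≤ Real.exp (Real.log x) := by
  rcases eq_or_ne x 0 with rfl | hx
  · simp
  · exact (Real.exp_log_eq_abs hx).ge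

theorem Real.le_rpow_add_one {x p : ℝ} (hx : 0 ≤ x) (hp : 1 ≤ p) : x ≤ x ^ p + 1 := by
  rcases le_total x 1 with h | h
  · linarith [Real.rpow_nonneg hx p]
  · linarith [Real.self_le_rpow_of_one_le h hp]

theorem summable_mul_exp_neg_of_eventually {a s : ℕ → ℝ} {δ c : ℝ} (hδc : δ < c)
    (ha : ∀ᶠ k in atTop, Real.log (a k) ≤ δ * k) (hs : ∀ᶠ k in atTop, c * k ≤ s k) :
    Summable fun k => a k * Real.exp (-s k) := by
  refine Summable.of_norm_bounded_eventually_nat (summable_geometric_of_lt_one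
    (Real.exp_nonneg _) (Real.exp_lt_one_iff.mpr (sub_neg.mpr hδc))) ?_
  filter_upwards [ha, hs] with k hak hsk
  calc ‖a k * Real.exp (-s k)‖ = |a k| * Real.exp (-s k) := by
        rw [norm_mul, Real.norm_eq_abs, Real.norm_of_nonneg (Real.exp_nonneg _)]
    _ ≤ Real.exp (δ * k) * Real.exp (-(c * k)) := by
        gcongr
        exact (Real.abs_le_exp_log _).trans (Real.exp_le_exp.mpr hak)
    _ = Real.exp (δ - c) ^ k := by
        rw [← Real.exp_add, ← Real.exp_nat_mul]
        ring_nf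

section

variable {Ω : Type*} [MeasurableSpace Ω] {μ : Measure Ω}

theorem MeasureTheory.Integrable.of_integrable_rpow [IsFiniteMeasure μ] {Z : Ω → ℝ}
    (hZm : AEStronglyMeasurable Z μ) (hZ : 0 ≤ Z) {p : ℝ} (hp : 1 ≤ p)
    (h : Integrable (fun ω => Z ω ^ p) μ) : Integrable Z μ :=
  (h.add (integrable_const 1)).mono' hZm <| Eventually.of_forall fun ω => by
    rw [Real.norm_of_nonneg (hZ ω)]
    exact Real.le_rpow_add_one (hZ ω) hp

theorem ae_eventually_le_mul_of_identDistrib [IsProbabilityMeasure μ] {Y : ℕ → Ω → ℝ}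
    {Z : Ω → ℝ} (hY : ∀ k, IdentDistrib (Y k) Z μ μ) (hZ : Integrable Z μ) (hZ₀ : 0 ≤ Z)
    {δ : ℝ} (hδ : 0 < δ) : ∀ᵐ ω ∂μ, ∀ᶠ k in atTop, Y k ω ≤ δ * k := by
  let : MeasureSpace Ω := ⟨μ⟩
  have htail : ∑' k : ℕ, μ {ω | Y k ω ∈ Set.Ioi (δ * k)} < ⊤ := by
    refine (tsum_congr fun k => ?_).trans_lt
      (tsum_prob_mem_Ioi_lt_top (hZ.div_const δ) fun ω => div_nonneg (hZ₀ ω) hδ.le)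
    refine ((hY k).measure_mem_eq measurableSet_Ioi).trans (congrArg μ ?_)
    ext ω
    simp only [Set.mem_preimage, Set.mem_ofPred_eq, Set.mem_Ioi, lt_div_iff₀ hδ, mul_comm]
  filter_upwards [ae_eventually_notMem htail.ne] with ω hω
  exact hω.mono fun k hk => not_lt.mp hk

theorem ae_eventually_mul_le_sum [IsProbabilityMeasure μ] {X : ℕ → Ω → ℝ}
    (hint : Integrable (X 0) μ) (hindep : Pairwise fun i j => IndepFun (X i) (X j) μ)
    (hident : ∀ i, IdentDistrib (X i) (X 0) μ μ) {c : ℝ} (hc : c < μ[X 0]) :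
    ∀ᵐ ω ∂μ, ∀ᶠ n in atTop, c * n ≤ ∑ i ∈ range n, X i ω := by
  filter_upwards [strong_law_ae_real X hint hindep hident] with ω hω
  filter_upwards [hω.eventually_const_lt hc, eventually_gt_atTop 0] with n hn hn₀
  rw [lt_div_iff₀ (by exact_mod_cast hn₀)] at hn
  exact hn.le

end

theorem summable_eta_expNegS_general
    {Ω : Type*} [MeasurableSpace Ω] (μ : Measure Ω) [IsProbabilityMeasure μ]
    (X : ℕ → Ω → ℝ) (η : ℕ → Ω → ℝ) (ε : ℝ) (hε : 0 < ε)
    (hXmeas : ∀ k, Measurable (X k))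
    (hXindep : iIndepFun X μ)
    (hXident : ∀ k, Measure.map (X k) μ = Measure.map (X 0) μ)
    (hXint : Integrable (X 0) μ)
    (hXmean : 0 < ∫ ω, X 0 ω ∂μ)
    (hηmeas : ∀ k, Measurable (η k))
    (hηident : ∀ k, 1 ≤ k → Measure.map (η k) μ = Measure.map (η 1) μ)
    (hηmom : Integrable (fun ω => (max (Real.log (η 1 ω)) 0) ^ (1 + ε)) μ) :
    ∀ᵐ ω ∂μ, Summable (fun k : ℕ =>
      η (k + 1) ω * Real.exp (-(∑ j ∈ Finset.range k, X (j + 1) ω))) := by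
  set m := ∫ ω, X 0 ω ∂μ
  have hXshift : ∀ i, IdentDistrib (X (i + 1)) (X 0) μ μ := fun i =>
    ⟨(hXmeas _).aemeasurable, (hXmeas 0).aemeasurable, hXident _⟩
  have hS := ae_eventually_mul_le_sum (X := fun i => X (i + 1)) (c := m / 2)
    ((hXshift 0).integrable_iff.mpr hXint) (fun i j hij => hXindep.indepFun (by omega))
    (fun i => (hXshift i).trans (hXshift 0).symm)
    (by rw [(hXshift 0).integral_eq]; linarith)
  have hlogPos : Measurable fun x : ℝ => max (Real.log x) 0 :=
    Real.measurable_log.max measurable_const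
  have hη := ae_eventually_le_mul_of_identDistrib (μ := μ) (δ := m / 4)
    (Y := fun k ω => max (Real.log (η (k + 1) ω)) 0)
    (fun k => IdentDistrib.comp ⟨(hηmeas _).aemeasurable, (hηmeas 1).aemeasurable,
      hηident (k + 1) (by omega)⟩ hlogPos)
    (hηmom.of_integrable_rpow (hlogPos.comp (hηmeas 1)).aestronglyMeasurable
      (fun ω => le_max_right _ _) (by linarith))
    (fun ω => le_max_right _ _) (by linarith)
  filter_upwards [hS, hη] with ω hSω hηω
  exact summable_mul_exp_neg_of_eventually (by linarith)
    (hηω.mono fun k hk => (le_max_left _ _).trans hk) hSω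

/-- Let `S_n = X₁ + ⋯ + Xₙ` be a random walk with i.i.d. increments of positive
mean, and `(η_k)` identically distributed nonnegative random variables with
`E[(log⁺ η₁)^{1+ε}] < ∞` for some `ε > 0`. Then
`G = Σ_{k=0}^∞ η_{k+1} e^{-S_k}` converges almost surely. -/
theorem summable_eta_expNegS
    {Ω : Type*} [MeasurableSpace Ω] (μ : Measure Ω) [IsProbabilityMeasure μ]
    (X : ℕ → Ω → ℝ) (η : ℕ → Ω → ℝ) (ε : ℝ) (hε : 0 < ε)
    (hXmeas : ∀ k, Measurable (X k))
    (hXindep : iIndepFun X μ)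
    (hXident : ∀ k, Measure.map (X k) μ = Measure.map (X 0) μ)
    (hXint : Integrable (X 0) μ)
    (hXmean : 0 < ∫ ω, X 0 ω ∂μ)
    (hηmeas : ∀ k, Measurable (η k))
    (hηnonneg : ∀ k ω, 0 ≤ η k ω)
    (hηident : ∀ k, 1 ≤ k → Measure.map (η k) μ = Measure.map (η 1) μ)
    (hηmom : Integrable (fun ω => (max (Real.log (η 1 ω)) 0) ^ (1 + ε)) μ) :
    ∀ᵐ ω ∂μ, Summable (fun k : ℕ =>
      η (k + 1) ω * Real.exp (-(∑ j ∈ Finset.range k, X (j + 1) ω))) :=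
  summable_eta_expNegS_general μ X η ε hε hXmeas hXindep hXident hXint hXmean hηmeas hηident hηmom
end

section
/- Extinction probability formula for multitype linear fractional processes: for the process in a fixed environment with generating functions as in the composition formula, the survival probability after n generations starting from one type-i particle is Q_n(i) = |M_{1,n}(i)|/(1 + |D_n|), i.e., P_{e_i}(|Z_n| = 0) = 1 - |M_{1,n}(i)|/(1 + |D_n|), obtained by evaluating 1 - F_{0,n}^{(i)}(0) via the identity 1 - F_{0,n}(s) = M_{1,n}(1-s)/(1 + ⟨D_n, 1-s⟩) at s = 0. -/
open Matrix

lemma linFrac_key {K : ℕ} (M : ℕ → Matrix (Fin K) (Fin K) ℝ)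
    (w : ℕ → Fin K → ℝ) (hM : ∀ k i j, 0 ≤ M k i j) (hw : ∀ k j, 0 ≤ w k j) :
    ∀ n (u : Fin K → ℝ), (∀ j, 0 ≤ u j) →
    ∀ i, linFracComp M w n (fun j => 1 - u j) i
      = 1 - ((matProd M n).mulVec u i) / (1 + linFracD M w n ⬝ᵥ u) := by
  intro n
  induction n with
  | zero => intro u hu i; simp [linFracComp, matProd, linFracD]
  | succ n ih =>
    intro u hu i
    have hd' : 0 ≤ w (n+1) ⬝ᵥ u :=
      Finset.sum_nonneg fun k _ => mul_nonneg (hw _ _) (hu _)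
    set d : ℝ := 1 + w (n+1) ⬝ᵥ u with hd
    have hd0 : d ≠ 0 := by positivity
    set v : Fin K → ℝ := (M (n+1)).mulVec u with hv
    have hvnn : ∀ j, 0 ≤ v j := by
      intro j
      simp only [hv, Matrix.mulVec, dotProduct]
      exact Finset.sum_nonneg fun k _ => mul_nonneg (hM _ _ _) (hu _)
    set u' : Fin K → ℝ := fun j => v j / d with hu'
    have hu'nn : ∀ j, 0 ≤ u' j := fun j => div_nonneg (hvnn j) (by positivity)
    have hmap : linFracMap (M (n+1)) (w (n+1)) (fun j => 1 - u j) = fun j => 1 - u' j := by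
      funext j
      simp [linFracMap, hu', hv, hd]
    have hcomp : linFracComp M w (n+1) (fun j => 1 - u j)
        = linFracComp M w n (linFracMap (M (n+1)) (w (n+1)) (fun j => 1 - u j)) := rfl
    rw [hcomp, hmap, ih u' hu'nn i]
    have hsmul : u' = d⁻¹ • v := by funext j; simp [hu', div_eq_inv_mul]
    have h1 : (matProd M n).mulVec u' i = (matProd M (n+1)).mulVec u i / d := by
      rw [hsmul, Matrix.mulVec_smul, hv, Matrix.mulVec_mulVec]
      simp [matProd, div_eq_inv_mul]
    have h2 : linFracD M w n ⬝ᵥ u'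
        = (Matrix.vecMul (linFracD M w n) (M (n+1))) ⬝ᵥ u / d := by
      rw [hsmul, dotProduct_smul, hv, Matrix.dotProduct_mulVec]
      simp [div_eq_inv_mul]
    rw [h1, h2]
    have hBnn : 0 ≤ (Matrix.vecMul (linFracD M w n) (M (n+1))) ⬝ᵥ u := by
      simp only [dotProduct, Matrix.vecMul]
      refine Finset.sum_nonneg fun k _ => mul_nonneg ?_ (hu _)
      exact Finset.sum_nonneg fun l _ => mul_nonneg (linFracD_nonneg M w hM hw n l) (hM _ _ _)
    set B : ℝ := (Matrix.vecMul (linFracD M w n) (M (n+1))) ⬝ᵥ u with hB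
    have hDfull : linFracD M w (n+1) ⬝ᵥ u = B + w (n+1) ⬝ᵥ u := by
      simp [linFracD, add_dotProduct, hB]
    rw [hDfull]
    have hden1 : (1 : ℝ) + B / d ≠ 0 := by positivity
    have hden2 : (1 : ℝ) + (B + w (n+1) ⬝ᵥ u) ≠ 0 := by positivity
    rw [div_div]
    have : d * (1 + B / d) = 1 + (B + w (n+1) ⬝ᵥ u) := by
      field_simp
      rw [hd]; ring
    rw [this]

/-- Extinction probability formula for multitype linear fractional processes:
evaluating `1 - F_{0,n}(s) = M_{1,n}(1-s)/(1 + ⟨D_n, 1-s⟩)` at `s = 0` gives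
`P_{e_i}(|Z_n| = 0) = F_{0,n}^{(i)}(0) = 1 - |M_{1,n}(i)|/(1 + |D_n|)`, i.e. the
survival probability is `Q_n(i) = |M_{1,n}(i)|/(1 + |D_n|)`. -/
theorem linFrac_extinction {K : ℕ} (M : ℕ → Matrix (Fin K) (Fin K) ℝ)
    (w : ℕ → Fin K → ℝ) (n : ℕ)
    (hM : ∀ k i j, 0 ≤ M k i j) (hw : ∀ k j, 0 ≤ w k j) :
    ∀ i, linFracComp M w n (fun _ => 0) i =
      1 - (∑ j, matProd M n i j) / (1 + ∑ j, linFracD M w n j) := by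
  intro i
  have h := linFrac_key M w hM hw n (fun _ => 1) (fun _ => zero_le_one) i
  simp only [sub_self] at h
  rw [h]
  simp [Matrix.mulVec, dotProduct]
end

section
/- Let v be a strictly positive left eigenvector common to positive matrices M_k (vM_k = ρ_k v), satisfying the uniform ratio bound of Hypothesis 2, and suppose the products satisfy M_{k,n}(i,j) = (∏_{r=k}^n ρ_r) u_i(M_{k,n}) v_j (1 + θ_{i,j} β^{n-k}) with |θ_{i,j}| ≤ C, β ∈ (0,1). Then D_n(j) = Σ_{k=1}^n ⟨w_k, M_{k+1,n} e_j⟩ admits the representation D_n(j) = (v_j/|v|) Σ_{k=1}^n η_{k,n} e^{S_n - S_{k-1}} (1 + O(β^{n-k})), where η_{k,n} := (|v|/ρ_k)⟨w_k, u(M_{k+1,n})⟩, and consequently D_n(j)/|D_n| → v_j/|v| whenever Σ_k η_{k,n} e^{-S_{k-1}} converges to a positive finite limit and the β-error terms are negligible. -/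
open Finset Filter Topology

/-!
Substituting the product representation, the `k`-th summand of `D_n(j)` is
`P v_j (A + β^{n-k-1} B)` with `P = ∏_{r=k+1}^n ρ_r`, `A = ⟨w_k, u(M_{k+1,n})⟩` and `|B| ≤ C A`
because all the weights `w_k(i) u_i` are nonnegative; hence it is `P v_j A (1 + ε_k)` with
`|ε_k| ≤ (C/β) β^{n-k}`, and `ρ_k P = e^{S_n - S_{k-1}}` turns `v_j A P` into
`(v_j/|v|) η_{k,n} e^{S_n - S_{k-1}}`.

For the ratio, `|v| e^{-S_n} D_n(j) / v_j = Σ_k η_{k,n} e^{-S_{k-1}} (1 + ε_k)` differs from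
`Σ_k η_{k,n} e^{-S_{k-1}}` by at most `(C/β) Σ_k η_{k,n} e^{-S_{k-1}} β^{n-k} → 0`, so it tends
to `G` for every `j`, and the common factor `e^{S_n}/|v|` cancels in `D_n(j) / |D_n|`.
-/

theorem exists_eq_mul_of_abs_le_mul {a b c : ℝ} (hc : 0 ≤ c) (h : |b| ≤ c * |a|) :
    ∃ ε, |ε| ≤ c ∧ b = a * ε := by
  rcases eq_or_ne a 0 with rfl | ha
  · exact ⟨0, by simpa using hc, by simpa using h⟩
  · refine ⟨b / a, ?_, (mul_div_cancel₀ b ha).symm⟩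
    rwa [abs_div, div_le_iff₀ (abs_pos.mpr ha)]

theorem Finset.exists_sum_mul_one_add_mul_eq_mul_one_add {ι : Type*} {s : Finset ι}
    {a θ : ι → ℝ} {C t : ℝ} (ha : ∀ i ∈ s, 0 ≤ a i) (hθ : ∀ i ∈ s, |θ i| ≤ C) (hC : 0 ≤ C)
    (ht : 0 ≤ t) :
    ∃ ε, |ε| ≤ C * t ∧ ∑ i ∈ s, a i * (1 + θ i * t) = (∑ i ∈ s, a i) * (1 + ε) := by
  have hbound : |(∑ i ∈ s, a i * θ i) * t| ≤ C * t * |∑ i ∈ s, a i| := by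
    rw [abs_mul, abs_of_nonneg ht, abs_of_nonneg (sum_nonneg ha), mul_right_comm, mul_sum]
    gcongr
    refine (abs_sum_le_sum_abs _ _).trans (sum_le_sum fun i hi => ?_)
    rw [abs_mul, abs_of_nonneg (ha i hi), mul_comm]
    exact mul_le_mul_of_nonneg_right (hθ i hi) (ha i hi)
  obtain ⟨ε, hε, hεeq⟩ := exists_eq_mul_of_abs_le_mul (mul_nonneg hC ht) hbound
  refine ⟨ε, hε, ?_⟩
  rw [mul_one_add, ← hεeq, sum_mul]
  simp only [mul_one_add, sum_add_distrib, mul_assoc]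

theorem Finset.exists_sum_eq_sum_mul_one_add {ι : Type*} {s : Finset ι} {f a b : ι → ℝ}
    (hb : ∀ k, 0 ≤ b k) (h : ∀ k ∈ s, ∃ e, |e| ≤ b k ∧ f k = a k * (1 + e)) :
    ∃ ε : ι → ℝ, (∀ k, |ε k| ≤ b k) ∧ ∑ k ∈ s, f k = ∑ k ∈ s, a k * (1 + ε k) := by
  classical
  have h' : ∀ k, ∃ e, |e| ≤ b k ∧ (k ∈ s → f k = a k * (1 + e)) := fun k =>
    if hk : k ∈ s then (h k hk).imp fun _ he => ⟨he.1, fun _ => he.2⟩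
    else ⟨0, by simpa using hb k, fun hk' => absurd hk' hk⟩
  choose ε hε hfε using h'
  exact ⟨ε, hε, sum_congr rfl fun k hk => hfε k hk⟩

theorem Matrix.exists_sum_mul_apply_eq_mul_one_add {ι : Type*} [Fintype ι]
    {M : Matrix ι ι ℝ} {w u v : ι → ℝ} {θ : ι → ι → ℝ} {P C t : ℝ}
    (hw : ∀ i, 0 ≤ w i) (hu : ∀ i, 0 ≤ u i) (hθ : ∀ i j, |θ i j| ≤ C) (hC : 0 ≤ C) (ht : 0 ≤ t)
    (hM : ∀ i j, M i j = P * u i * v j * (1 + θ i j * t)) (j : ι) :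
    ∃ ε, |ε| ≤ C * t ∧ ∑ i, w i * M i j = P * v j * (∑ i, w i * u i) * (1 + ε) := by
  obtain ⟨ε, hε, hsum⟩ := exists_sum_mul_one_add_mul_eq_mul_one_add (s := univ)
    (a := fun i => w i * u i) (θ := fun i => θ i j) (fun i _ => mul_nonneg (hw i) (hu i))
    (fun i _ => hθ i j) hC ht
  refine ⟨ε, hε, ?_⟩
  simp_rw [hM, mul_assoc, ← hsum, mul_sum]
  exact sum_congr rfl fun i _ => by ring

theorem pow_sub_succ_le_div {β : ℝ} (hβ0 : 0 < β) (hβ1 : β ≤ 1) (n k : ℕ) :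
    β ^ (n - (k + 1)) ≤ β ^ (n - k) / β := by
  rw [le_div_iff₀ hβ0, ← pow_succ]
  exact pow_le_pow_of_le_one hβ0.le hβ1 (by omega)

theorem Real.exp_sum_log_sub_sum_log {ρ : ℕ → ℝ} (hρ : ∀ r, 0 < ρ r) {m n : ℕ} (hmn : m ≤ n) :
    Real.exp (∑ r ∈ Icc 1 n, Real.log (ρ r) - ∑ r ∈ Icc 1 m, Real.log (ρ r)) =
      ∏ r ∈ Ioc m n, ρ r := by
  have hIcc : ∀ N, Icc 1 N = Ioc 0 N := fun N => by simp [← Icc_add_one_left_eq_Ioc]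
  rw [hIcc, hIcc, ← sum_Ioc_consecutive _ (Nat.zero_le m) hmn, add_sub_cancel_left,
    Real.exp_sum]
  exact prod_congr rfl fun r _ => Real.exp_log (hρ r)

theorem Real.exp_sub_pred_eq_mul_prod {ρ S : ℕ → ℝ} (hρ : ∀ r, 0 < ρ r)
    (hS : ∀ n, S n = ∑ r ∈ Icc 1 n, Real.log (ρ r)) {k n : ℕ} (hk : 1 ≤ k) (hkn : k ≤ n) :
    Real.exp (S n - S (k - 1)) = ρ k * ∏ r ∈ Icc (k + 1) n, ρ r := by
  rw [hS, hS, Real.exp_sum_log_sub_sum_log hρ (by omega), ← Icc_add_one_left_eq_Ioc,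
    Nat.sub_add_cancel hk, Icc_add_one_left_eq_Ioc, mul_prod_Ioc_eq_prod_Icc hkn]

theorem tendsto_of_eventually_eq_sum_mul_one_add {α ι : Type*} {l : Filter α}
    {s : α → Finset ι} {a b : α → ι → ℝ} {f : α → ℝ} {c G : ℝ} (ha : ∀ n k, 0 ≤ a n k)
    (hf : ∀ᶠ n in l, ∃ ε : ι → ℝ, (∀ k, |ε k| ≤ c * b n k) ∧
      f n = ∑ k ∈ s n, a n k * (1 + ε k))
    (hG : Tendsto (fun n => ∑ k ∈ s n, a n k) l (𝓝 G))
    (hb : Tendsto (fun n => ∑ k ∈ s n, a n k * b n k) l (𝓝 0)) :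
    Tendsto f l (𝓝 G) := by
  have herr : Tendsto (fun n => f n - ∑ k ∈ s n, a n k) l (𝓝 0) := by
    refine squeeze_zero_norm' ?_ (by simpa using hb.const_mul c)
    filter_upwards [hf] with n ⟨ε, hε, hfn⟩
    rw [hfn, ← sum_sub_distrib, mul_sum, Real.norm_eq_abs]
    refine (abs_sum_le_sum_abs _ _).trans (sum_le_sum fun k _ => ?_)
    rw [mul_one_add, add_sub_cancel_left, abs_mul, abs_of_nonneg (ha n k), mul_left_comm]
    exact mul_le_mul_of_nonneg_left (hε k) (ha n k)
  simpa using herr.add hG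

theorem tendsto_div_sum_of_tendsto_div {α ι : Type*} [Fintype ι] {l : Filter α}
    {x : α → ι → ℝ} {c : ι → ℝ} {r : α → ℝ} {G : ℝ} (hc : ∀ i, c i ≠ 0) (hr : ∀ n, r n ≠ 0)
    (hG : G ≠ 0) (hcs : ∑ i, c i ≠ 0)
    (h : ∀ i, Tendsto (fun n => x n i / (c i * r n)) l (𝓝 G)) (j : ι) :
    Tendsto (fun n => x n j / ∑ i, x n i) l (𝓝 (c j / ∑ i, c i)) := by
  have hcx : ∀ n i, c i * (x n i / (c i * r n)) = x n i / r n := fun n i => by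
    field_simp [hc i]
  have hlim := ((h j).const_mul (c j)).div
    (tendsto_finsetSum univ fun i _ => (h i).const_mul (c i)) (by simp [← sum_mul, hcs, hG])
  rw [← sum_mul, mul_div_mul_right _ _ hG] at hlim
  refine hlim.congr fun n => ?_
  simp only [Pi.div_apply, hcx, ← sum_div]
  exact div_div_div_cancel_right₀ (hr n) _ _

theorem Dn_representation_general {K : ℕ}
    (Mkn : ℕ → ℕ → Matrix (Fin K) (Fin K) ℝ)
    (ρ : ℕ → ℝ) (v : Fin K → ℝ) (w : ℕ → Fin K → ℝ)
    (u : ℕ → ℕ → Fin K → ℝ) (θ : ℕ → ℕ → Fin K → Fin K → ℝ)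
    (β C : ℝ) (hβ0 : 0 < β) (hβ1 : β < 1) (hC : 0 < C)
    (hρ : ∀ k, 0 < ρ k) (hv : ∀ j, 0 < v j)
    (hw : ∀ k j, 0 ≤ w k j) (hu : ∀ k n i, 0 ≤ u k n i)
    (hθ : ∀ k n i j, |θ k n i j| ≤ C)
    (hrep : ∀ k n, 1 ≤ k → k ≤ n + 1 → ∀ i j,
      Mkn k n i j = (∏ r ∈ Finset.Icc k n, ρ r) * u k n i * v j *
        (1 + θ k n i j * β ^ (n - k)))
    (S : ℕ → ℝ) (hS : ∀ n, S n = ∑ r ∈ Finset.Icc 1 n, Real.log (ρ r))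
    (D : ℕ → Fin K → ℝ)
    (hD : ∀ n j, D n j = ∑ k ∈ Finset.Icc 1 n, ∑ i, w k i * Mkn (k + 1) n i j)
    (η : ℕ → ℕ → ℝ)
    (hη : ∀ k n, η k n = ((∑ j, v j) / ρ k) * ∑ i, w k i * u (k + 1) n i) :
    (∃ C' > 0, ∀ n, 1 ≤ n → ∀ j, ∃ ε : ℕ → ℝ,
        (∀ k, |ε k| ≤ C' * β ^ (n - k)) ∧
        D n j = (v j / ∑ i, v i) *
          ∑ k ∈ Finset.Icc 1 n,
            η k n * Real.exp (S n - S (k - 1)) * (1 + ε k)) ∧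
      (∀ G : ℝ, 0 < G →
        Tendsto (fun n => ∑ k ∈ Finset.Icc 1 n,
            η k n * Real.exp (-(S (k - 1)))) atTop (nhds G) →
        Tendsto (fun n => ∑ k ∈ Finset.Icc 1 n,
            η k n * Real.exp (-(S (k - 1))) * β ^ (n - k)) atTop (nhds 0) →
        ∀ j, Tendsto (fun n => D n j / ∑ i, D n i) atTop
          (nhds (v j / ∑ i, v i))) := by
  have hrepr : ∀ n j, ∃ ε : ℕ → ℝ, (∀ k, |ε k| ≤ C / β * β ^ (n - k)) ∧
      D n j = (v j / ∑ i, v i) *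
        ∑ k ∈ Icc 1 n, η k n * Real.exp (S n - S (k - 1)) * (1 + ε k) := by
    intro n j
    have hV : 0 < ∑ i, v i := sum_pos (fun i _ => hv i) ⟨j, mem_univ j⟩
    simp_rw [hD, mul_sum, ← mul_assoc]
    refine exists_sum_eq_sum_mul_one_add (fun k => by positivity) fun k hk => ?_
    obtain ⟨hk1, hkn⟩ := mem_Icc.mp hk
    obtain ⟨e, he, hsum⟩ := Matrix.exists_sum_mul_apply_eq_mul_one_add (hw k) (hu (k + 1) n)
      (hθ (k + 1) n) hC.le (pow_nonneg hβ0.le _) (hrep (k + 1) n (by omega) (by omega)) j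
    refine ⟨e, he.trans ?_, ?_⟩
    · rw [div_mul_eq_mul_div, mul_div_assoc]
      exact mul_le_mul_of_nonneg_left (pow_sub_succ_le_div hβ0 hβ1.le n k) hC.le
    · rw [hsum, hη, Real.exp_sub_pred_eq_mul_prod hρ hS hk1 hkn]
      field_simp [(hρ k).ne']
  refine ⟨⟨C / β, div_pos hC hβ0, fun n _ j => hrepr n j⟩, fun G hG hGlim hβlim j => ?_⟩
  have hV : 0 < ∑ i, v i := sum_pos (fun i _ => hv i) ⟨j, mem_univ j⟩
  have hη0 : ∀ k n, 0 ≤ η k n := fun k n => by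
    rw [hη]
    exact mul_nonneg (div_nonneg hV.le (hρ k).le)
      (sum_nonneg fun i _ => mul_nonneg (hw k i) (hu _ n i))
  refine tendsto_div_sum_of_tendsto_div (r := fun n => Real.exp (S n) / ∑ i, v i)
    (fun i => (hv i).ne') (fun n => by positivity) hG.ne' hV.ne' (fun i => ?_) j
  refine tendsto_of_eventually_eq_sum_mul_one_add
    (a := fun n k => η k n * Real.exp (-(S (k - 1)))) (b := fun n k => β ^ (n - k)) (c := C / β)
    (fun n k => mul_nonneg (hη0 k n) (Real.exp_pos _).le) (Eventually.of_forall fun n => ?_)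
    hGlim hβlim
  obtain ⟨ε, hε, hDε⟩ := hrepr n i
  refine ⟨ε, hε, ?_⟩
  rw [hDε]
  simp_rw [sub_eq_add_neg (S n), Real.exp_add, mul_left_comm _ (Real.exp (S n)),
    mul_assoc (Real.exp (S n)), ← mul_sum]
  field_simp [(hv i).ne']

/-- Representation of `D_n(j) = Σ_{k=1}^n ⟨w_k, M_{k+1,n} e_j⟩` for products of
positive matrices `M_{k,n}` sharing the common positive left eigenvector `v`
and admitting `M_{k,n}(i,j) = (∏_{r=k}^n ρ_r) u_i(M_{k,n}) v_j (1 + θ β^{n-k})`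
with `|θ| ≤ C`:
`D_n(j) = (v_j/|v|) Σ_{k=1}^n η_{k,n} e^{S_n - S_{k-1}} (1 + O(β^{n-k}))`,
where `η_{k,n} = (|v|/ρ_k)⟨w_k, u(M_{k+1,n})⟩` and `S_n = Σ_{r≤n} log ρ_r`;
consequently `D_n(j)/|D_n| → v_j/|v|` whenever `Σ_k η_{k,n} e^{-S_{k-1}}`
converges to a positive finite limit and the `β`-error terms are negligible. -/
theorem Dn_representation {K : ℕ} [NeZero K]
    (Mkn : ℕ → ℕ → Matrix (Fin K) (Fin K) ℝ)
    (ρ : ℕ → ℝ) (v : Fin K → ℝ) (w : ℕ → Fin K → ℝ)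
    (u : ℕ → ℕ → Fin K → ℝ) (θ : ℕ → ℕ → Fin K → Fin K → ℝ)
    (β C : ℝ) (hβ0 : 0 < β) (hβ1 : β < 1) (hC : 0 < C)
    (hρ : ∀ k, 0 < ρ k) (hv : ∀ j, 0 < v j)
    (hw : ∀ k j, 0 ≤ w k j) (hu : ∀ k n i, 0 ≤ u k n i)
    (hθ : ∀ k n i j, |θ k n i j| ≤ C)
    (hrep : ∀ k n, 1 ≤ k → k ≤ n + 1 → ∀ i j,
      Mkn k n i j = (∏ r ∈ Finset.Icc k n, ρ r) * u k n i * v j *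
        (1 + θ k n i j * β ^ (n - k)))
    (S : ℕ → ℝ) (hS : ∀ n, S n = ∑ r ∈ Finset.Icc 1 n, Real.log (ρ r))
    (D : ℕ → Fin K → ℝ)
    (hD : ∀ n j, D n j = ∑ k ∈ Finset.Icc 1 n, ∑ i, w k i * Mkn (k + 1) n i j)
    (η : ℕ → ℕ → ℝ)
    (hη : ∀ k n, η k n = ((∑ j, v j) / ρ k) * ∑ i, w k i * u (k + 1) n i) :
    (∃ C' > 0, ∀ n, 1 ≤ n → ∀ j, ∃ ε : ℕ → ℝ,
        (∀ k, |ε k| ≤ C' * β ^ (n - k)) ∧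
        D n j = (v j / ∑ i, v i) *
          ∑ k ∈ Finset.Icc 1 n,
            η k n * Real.exp (S n - S (k - 1)) * (1 + ε k)) ∧
      (∀ G : ℝ, 0 < G →
        Tendsto (fun n => ∑ k ∈ Finset.Icc 1 n,
            η k n * Real.exp (-(S (k - 1)))) atTop (nhds G) →
        Tendsto (fun n => ∑ k ∈ Finset.Icc 1 n,
            η k n * Real.exp (-(S (k - 1))) * β ^ (n - k)) atTop (nhds 0) →
        ∀ j, Tendsto (fun n => D n j / ∑ i, D n i) atTop
          (nhds (v j / ∑ i, v i))) :=
  Dn_representation_general Mkn ρ v w u θ β C hβ0 hβ1 hC hρ hv hw hu hθ hrep S hS D hD η hη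
end
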